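/- arXiv:2404.01436 — 3 statements merged into one kernel-verified Lean document; each statement's English description precedes it below -/
import Mathlib

section
/- Lemma (Stage II bound on the denominator). Under Assumption 2 alone (together with the recursion v_{t,i} = β₂·v_{t−1,i} + (1−β₂)·g_{t,i}²), for every T ≥ 1: (1/T)·Σ_{t=1}^T E[√(β₂·‖v_{t−1}‖ + ζ)] ≤ √ζ + d·√(D₀ + ‖v₀‖) + (2·√(d·D₁)/√(1−β₂)) · (1/T)·Σ_{t=1}^T E[‖∇f(x_t)‖]. -/
/-!
Coordinatewise, `v n i = β₂ v (n-1) i + (1 - β₂) g n i²`. Conditioning on `ℱ n`, the tangent line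
of the concave `√` (a conditional Jensen inequality) replaces `g n i²` by its conditional second
moment, at most `D₀ + D₁ (∂ᵢf(x n))²`, and `√(a + b) ≤ √a + √b` splits off
`√((1 - β₂) D₁) |∂ᵢf(x n)|`. Unrolling the recursion down to `v₀` gives
`E √(v n i) ≤ √(v₀ i + D₀) + √((1 - β₂) D₁) ∑_{r ≤ n} √β₂^(n-r) E |∂ᵢf(x r)|`.
Summing over coordinates uses `‖y‖ ≤ ∑ |yᵢ| ≤ √d ‖y‖`; averaging over time, the geometric weights
cost `1 / (1 - √β₂)`, and `√(1 - β₂) / (1 - √β₂) ≤ 2 / √(1 - β₂)`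
because `1 - β₂ = (1 - √β₂)(1 + √β₂)`.
-/

open MeasureTheory Finset

namespace Real

lemma sqrt_add_le_add_sqrt {x y : ℝ} (hx : 0 ≤ x) (hy : 0 ≤ y) : √(x + y) ≤ √x + √y := by
  rw [sqrt_le_left (by positivity)]
  nlinarith [sq_sqrt hx, sq_sqrt hy, sqrt_nonneg x, sqrt_nonneg y]

lemma sqrt_sum_le_sum_sqrt {ι : Type*} (s : Finset ι) {w : ι → ℝ} (hw : ∀ i ∈ s, 0 ≤ w i) :
    √(∑ i ∈ s, w i) ≤ ∑ i ∈ s, √(w i) := by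
  rw [sqrt_le_left (sum_nonneg fun i _ => sqrt_nonneg _)]
  calc ∑ i ∈ s, w i = ∑ i ∈ s, √(w i) ^ 2 := sum_congr rfl fun i hi => (sq_sqrt (hw i hi)).symm
    _ ≤ _ := sum_sq_le_sq_sum_of_nonneg fun i _ => sqrt_nonneg _

lemma sqrt_le_sqrt_div_two_add {x y : ℝ} (hx : 0 ≤ x) (hy : 0 < y) :
    √x ≤ √y / 2 + x / (2 * √y) := by
  have hsy := sqrt_pos.2 hy
  rw [div_add_div _ _ two_ne_zero (by positivity), le_div_iff₀ (by positivity)]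
  nlinarith [sq_sqrt hx, sq_sqrt hy.le, sq_nonneg (√x - √y)]

lemma sqrt_one_sub_div_one_sub_sqrt_le {β : ℝ} (hβ0 : 0 ≤ β) (hβ1 : β < 1) :
    √(1 - β) / (1 - √β) ≤ 2 / √(1 - β) := by
  have hs : √β < 1 := (sqrt_lt' one_pos).2 (by linarith)
  rw [div_le_div_iff₀ (by linarith) (sqrt_pos.2 (by linarith)), ← sq, sq_sqrt (by linarith)]
  nlinarith [sq_sqrt hβ0, sqrt_nonneg β]

end Real

def discountedSum (q : ℝ) (A : ℕ → ℝ) (n : ℕ) : ℝ := ∑ r ∈ Icc 1 n, q ^ (n - r) * A r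

section DiscountedSum

variable {q : ℝ} {A B : ℕ → ℝ}

@[simp] lemma discountedSum_zero : discountedSum q A 0 = 0 := by simp [discountedSum]

lemma discountedSum_succ (n : ℕ) :
    discountedSum q A (n + 1) = q * discountedSum q A n + A (n + 1) := by
  rw [discountedSum, sum_Icc_succ_top (by omega), discountedSum, mul_sum, Nat.sub_self, pow_zero,
    one_mul]
  congr 1
  refine sum_congr rfl fun r hr => ?_
  rw [Nat.sub_add_comm (mem_Icc.1 hr).2, pow_succ]
  ring

lemma discountedSum_nonneg (hq : 0 ≤ q) (hA : ∀ r, 0 ≤ A r) (n : ℕ) : 0 ≤ discountedSum q A n :=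
  sum_nonneg fun r _ => mul_nonneg (pow_nonneg hq _) (hA r)

lemma discountedSum_mono (hq : 0 ≤ q) {n : ℕ} (h : ∀ r ∈ Icc 1 n, A r ≤ B r) :
    discountedSum q A n ≤ discountedSum q B n :=
  sum_le_sum fun r hr => mul_le_mul_of_nonneg_left (h r hr) (pow_nonneg hq _)

lemma discountedSum_const_mul (c : ℝ) (n : ℕ) :
    discountedSum q (fun r => c * A r) n = c * discountedSum q A n := by
  rw [discountedSum, discountedSum, mul_sum]
  exact sum_congr rfl fun r _ => by ring

lemma sum_discountedSum {ι : Type*} (s : Finset ι) (A : ι → ℕ → ℝ) (n : ℕ) :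
    ∑ i ∈ s, discountedSum q (A i) n = discountedSum q (fun r => ∑ i ∈ s, A i r) n := by
  simp only [discountedSum, mul_sum]
  exact Finset.sum_comm

lemma sum_Icc_discountedSum_le (hq0 : 0 ≤ q) (hq1 : q < 1) (hA : ∀ r, 0 ≤ A r) (T : ℕ) :
    ∑ t ∈ Icc 1 T, discountedSum q A (t - 1) ≤ (1 - q)⁻¹ * ∑ t ∈ Icc 1 T, A t := by
  have shift : ∀ (f : ℕ → ℝ) (T : ℕ), ∑ t ∈ Icc 1 T, f t = ∑ n ∈ range T, f (n + 1) := by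
    intro f T
    rw [← Finset.Ico_add_one_right_eq_Icc, sum_Ico_eq_sum_range]
    exact sum_congr (by simp) fun n _ => by rw [add_comm]
  set W : ℕ → ℝ := fun T => ∑ n ∈ range T, discountedSum q A n
  have hW : W (T + 1) = q * W T + ∑ t ∈ Icc 1 T, A t := by
    simp only [W, sum_range_succ', discountedSum_zero, add_zero, discountedSum_succ,
      sum_add_distrib, mul_sum, shift]
  have hWmono : W T ≤ W (T + 1) := by
    simp only [W, sum_range_succ]
    linarith [discountedSum_nonneg hq0 hA T]
  rw [shift, le_inv_mul_iff₀ (by linarith)]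
  simp only [Nat.add_sub_cancel]
  change (1 - q) * W T ≤ _
  nlinarith

lemma average_le_of_le_discountedSum {a : ℕ → ℝ} {C K : ℝ} (hq0 : 0 ≤ q) (hq1 : q < 1)
    (hK : 0 ≤ K) (hA : ∀ r, 0 ≤ A r) (ha : ∀ n, a n ≤ C + K * discountedSum q A n) {T : ℕ}
    (hT : 1 ≤ T) :
    1 / (T : ℝ) * ∑ t ∈ Icc 1 T, a (t - 1)
      ≤ C + K / (1 - q) * (1 / (T : ℝ) * ∑ t ∈ Icc 1 T, A t) := by
  have hT' : (0 : ℝ) < T := by exact_mod_cast hT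
  have hsum : ∑ t ∈ Icc 1 T, a (t - 1) ≤ T * C + K * ((1 - q)⁻¹ * ∑ t ∈ Icc 1 T, A t) :=
    calc ∑ t ∈ Icc 1 T, a (t - 1) ≤ ∑ t ∈ Icc 1 T, (C + K * discountedSum q A (t - 1)) :=
          sum_le_sum fun t _ => ha (t - 1)
      _ = T * C + K * ∑ t ∈ Icc 1 T, discountedSum q A (t - 1) := by
          rw [sum_add_distrib, sum_const, Nat.card_Icc, nsmul_eq_mul, mul_sum]
          simp
      _ ≤ _ := by gcongr; exact sum_Icc_discountedSum_le hq0 hq1 hA T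
  calc 1 / (T : ℝ) * ∑ t ∈ Icc 1 T, a (t - 1)
      ≤ 1 / T * (T * C + K * ((1 - q)⁻¹ * ∑ t ∈ Icc 1 T, A t)) := by gcongr
    _ = _ := by field_simp

end DiscountedSum

section ConditionalJensen

variable {Ω : Type*} {m m0 : MeasurableSpace Ω} {μ : Measure Ω} [IsFiniteMeasure μ]

lemma MeasureTheory.Integrable.sqrt {f : Ω → ℝ} (hf : Integrable f μ) :
    Integrable (fun ω => √(f ω)) μ := by
  refine (hf.abs.add (integrable_const 1)).mono'
    (Real.continuous_sqrt.comp_aestronglyMeasurable hf.aestronglyMeasurable) ?_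
  filter_upwards with ω
  rw [Real.norm_eq_abs, abs_of_nonneg (Real.sqrt_nonneg _)]
  have := Real.sqrt_le_sqrt (le_abs_self (f ω))
  simp only [Pi.add_apply]
  nlinarith [Real.sq_sqrt (abs_nonneg (f ω)), Real.sqrt_nonneg |f ω|]

lemma integral_sqrt_le_of_condExp_le (hm : m ≤ m0) {X Y : Ω → ℝ} {δ : ℝ} (hδ : 0 < δ)
    (hX0 : 0 ≤ X) (hX : Integrable X μ) (hY : StronglyMeasurable[m] Y) (hYδ : ∀ ω, δ ≤ Y ω)
    (hYi : Integrable (fun ω => √(Y ω)) μ) (hcond : μ[X|m] ≤ᵐ[μ] Y) :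
    ∫ ω, √(X ω) ∂μ ≤ ∫ ω, √(Y ω) ∂μ := by
  set h : Ω → ℝ := fun ω => (2 * √(Y ω))⁻¹
  have hY_pos : ∀ ω, 0 < Y ω := fun ω => hδ.trans_le (hYδ ω)
  have hsqrtY_pos : ∀ ω, 0 < √(Y ω) := fun ω => Real.sqrt_pos.2 (hY_pos ω)
  have hh : StronglyMeasurable[m] h := ((hY.measurable.sqrt.const_mul 2).inv).stronglyMeasurable
  have hh_bound : ∀ᵐ ω ∂μ, ‖h ω‖ ≤ (2 * √δ)⁻¹ := by
    filter_upwards with ω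
    rw [Real.norm_eq_abs, abs_of_pos (by have := hsqrtY_pos ω; positivity)]
    exact inv_anti₀ (by positivity) (by gcongr; exact hYδ ω)
  have hhY : h * Y = fun ω => √(Y ω) / 2 := by
    ext ω
    have := hsqrtY_pos ω
    simp only [Pi.mul_apply, h]
    field_simp
    rw [Real.sq_sqrt (hδ.le.trans (hYδ ω))]
  have hhX : Integrable (h * X) μ :=
    hX.bdd_mul (hh.mono hm).aestronglyMeasurable hh_bound
  have hpull : μ[h * X|m] =ᵐ[μ] h * μ[X|m] :=
    condExp_stronglyMeasurable_mul_of_bound hm hh hX _ hh_bound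
  -- `h = 1/(2√Y)` is the slope of the tangent of `√` at `Y`; being `m`-measurable and bounded,
  -- it can be pulled out of the conditional expectation.
  have hhX_le : ∫ ω, (h * X) ω ∂μ ≤ ∫ ω, √(Y ω) / 2 ∂μ := by
    rw [← integral_condExp hm, integral_congr_ae hpull, ← hhY]
    refine integral_mono_ae (integrable_condExp.congr hpull) (hhY ▸ hYi.div_const 2) ?_
    filter_upwards [hcond] with ω hω
    exact mul_le_mul_of_nonneg_left hω (by have := hsqrtY_pos ω; positivity)
  calc ∫ ω, √(X ω) ∂μ ≤ ∫ ω, (√(Y ω) / 2 + (h * X) ω) ∂μ := by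
        refine integral_mono_of_nonneg (.of_forall fun ω => Real.sqrt_nonneg _)
          ((hYi.div_const 2).add hhX) (.of_forall fun ω => ?_)
        simpa [h, div_eq_inv_mul] using Real.sqrt_le_sqrt_div_two_add (hX0 ω) (hY_pos ω)
    _ ≤ ∫ ω, √(Y ω) ∂μ := by
        rw [integral_add (hYi.div_const 2) hhX, integral_div]
        rw [integral_div] at hhX_le
        linarith

lemma integral_sqrt_add_mul_le_of_condExp_le (hm : m ≤ m0) {K Z G : Ω → ℝ} {b D₀ D₁ : ℝ}
    (hb : 0 < b) (hD₀ : 0 < D₀) (hD₁ : 0 ≤ D₁)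
    (hK : StronglyMeasurable[m] K) (hK0 : 0 ≤ K) (hKi : Integrable K μ)
    (hZ0 : 0 ≤ Z) (hZ : Integrable Z μ) (hG : StronglyMeasurable[m] G) (hGi : Integrable G μ)
    (hcond : μ[Z|m] ≤ᵐ[μ] fun ω => D₀ + D₁ * G ω ^ 2) :
    ∫ ω, √(K ω + b * Z ω) ∂μ ≤ ∫ ω, √(K ω + b * D₀) ∂μ + √(b * D₁) * ∫ ω, |G ω| ∂μ := by
  set Y : Ω → ℝ := fun ω => K ω + b * (D₀ + D₁ * G ω ^ 2)
  have hsplit : ∀ ω, √(Y ω) ≤ √(K ω + b * D₀) + √(b * D₁) * |G ω| := fun ω => by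
    rw [← Real.sqrt_sq_eq_abs, ← Real.sqrt_mul (by positivity)]
    convert Real.sqrt_add_le_add_sqrt (add_nonneg (hK0 ω) (by positivity) : 0 ≤ K ω + b * D₀)
      (by positivity : 0 ≤ b * D₁ * G ω ^ 2) using 2
    ring
  have hKD₀ : Integrable (fun ω => √(K ω + b * D₀)) μ := (hKi.add (integrable_const _)).sqrt
  have hbound_i : Integrable (fun ω => √(K ω + b * D₀) + √(b * D₁) * |G ω|) μ :=
    hKD₀.add (hGi.abs.const_mul _)
  have hYm : StronglyMeasurable[m] Y :=
    hK.add (((hG.pow 2).const_mul D₁).const_add D₀ |>.const_mul b)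
  have hYi : Integrable (fun ω => √(Y ω)) μ := by
    refine hbound_i.mono' (hYm.mono hm).measurable.sqrt.aestronglyMeasurable
      (.of_forall fun ω => ?_)
    rw [Real.norm_eq_abs, abs_of_nonneg (Real.sqrt_nonneg _)]
    exact hsplit ω
  have hYδ : ∀ ω, b * D₀ ≤ Y ω := fun ω => by
    have : 0 ≤ K ω := hK0 ω
    show b * D₀ ≤ K ω + b * (D₀ + D₁ * G ω ^ 2)
    nlinarith [mul_nonneg hb.le (mul_nonneg hD₁ (sq_nonneg (G ω)))]
  have hcondX : μ[fun ω => K ω + b * Z ω|m] ≤ᵐ[μ] Y := by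
    change μ[K + b • Z|m] ≤ᵐ[μ] Y
    filter_upwards [condExp_add hKi (hZ.smul b) m, condExp_smul b Z m, hcond] with ω h1 h2 h3
    rw [h1, Pi.add_apply, condExp_of_stronglyMeasurable hm hK hKi, h2]
    simp only [Pi.smul_apply, smul_eq_mul, Y]
    gcongr
  calc ∫ ω, √(K ω + b * Z ω) ∂μ ≤ ∫ ω, √(Y ω) ∂μ :=
        integral_sqrt_le_of_condExp_le hm (mul_pos hb hD₀)
          (fun ω => add_nonneg (hK0 ω) (mul_nonneg hb.le (hZ0 ω))) (hKi.add (hZ.const_mul b))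
          hYm hYδ hYi hcondX
    _ ≤ ∫ ω, (√(K ω + b * D₀) + √(b * D₁) * |G ω|) ∂μ := integral_mono hYi hbound_i hsplit
    _ = _ := by rw [integral_add hKD₀ (hGi.abs.const_mul _), integral_const_mul]

end ConditionalJensen

namespace EuclideanSpace

variable {ι : Type*} [Fintype ι]

lemma norm_le_sum_abs (y : EuclideanSpace ℝ ι) : ‖y‖ ≤ ∑ i, |y i| := by
  rw [EuclideanSpace.norm_eq]
  refine (Real.sqrt_sum_le_sum_sqrt _ fun i _ => sq_nonneg _).trans_eq ?_
  simp [Real.sqrt_sq_eq_abs]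

lemma sum_abs_le_sqrt_card_mul_norm (y : EuclideanSpace ℝ ι) :
    ∑ i, |y i| ≤ √(Fintype.card ι) * ‖y‖ := by
  rw [← Real.sqrt_sq (norm_nonneg y), ← Real.sqrt_mul (Nat.cast_nonneg _),
    Real.le_sqrt (sum_nonneg fun i _ => abs_nonneg _) (by positivity),
    EuclideanSpace.norm_sq_eq]
  simpa using sq_sum_le_card_mul_sum_sq (s := univ) (f := fun i => |y i|)

variable {Ω : Type*} {m0 : MeasurableSpace Ω} {μ : Measure Ω}

lemma integral_sqrt_mul_norm_add_le [IsProbabilityMeasure μ] {V : Ω → EuclideanSpace ℝ ι}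
    {β ζ : ℝ} (hβ1 : β ≤ 1) (hζ : 0 ≤ ζ) (hV0 : ∀ ω i, 0 ≤ V ω i) (hV : ∀ i, Integrable (V · i) μ) :
    ∫ ω, √(β * ‖V ω‖ + ζ) ∂μ ≤ √ζ + ∑ i, ∫ ω, √(V ω i) ∂μ := by
  have hpt : ∀ ω, √(β * ‖V ω‖ + ζ) ≤ √ζ + ∑ i, √(V ω i) := fun ω => by
    have hnorm : ‖V ω‖ ≤ ∑ i, V ω i :=
      (norm_le_sum_abs _).trans_eq (sum_congr rfl fun i _ => abs_of_nonneg (hV0 ω i))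
    calc √(β * ‖V ω‖ + ζ) ≤ √(ζ + ∑ i, V ω i) :=
          Real.sqrt_le_sqrt (by nlinarith [norm_nonneg (V ω)])
      _ ≤ √ζ + √(∑ i, V ω i) := Real.sqrt_add_le_add_sqrt hζ (sum_nonneg fun i _ => hV0 ω i)
      _ ≤ √ζ + ∑ i, √(V ω i) := by gcongr; exact Real.sqrt_sum_le_sum_sqrt _ fun i _ => hV0 ω i
  have hint : Integrable (fun ω => √ζ + ∑ i, √(V ω i)) μ :=
    (integrable_const _).add (integrable_finsetSum _ fun i _ => (hV i).sqrt)
  calc ∫ ω, √(β * ‖V ω‖ + ζ) ∂μ ≤ ∫ ω, (√ζ + ∑ i, √(V ω i)) ∂μ :=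
        integral_mono_of_nonneg (.of_forall fun _ => Real.sqrt_nonneg _) hint (.of_forall hpt)
    _ = √ζ + ∑ i, ∫ ω, √(V ω i) ∂μ := by
        rw [integral_add (integrable_const _) (integrable_finsetSum _ fun i _ => (hV i).sqrt),
          integral_finsetSum _ fun i _ => (hV i).sqrt]
        simp

lemma sum_integral_abs_le_sqrt_card_mul_integral_norm {F : Ω → EuclideanSpace ℝ ι}
    (hF : ∀ i, Integrable (F · i) μ) :
    ∑ i, ∫ ω, |F ω i| ∂μ ≤ √(Fintype.card ι) * ∫ ω, ‖F ω‖ ∂μ := by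
  rw [← integral_finsetSum _ fun i _ => (hF i).abs, ← integral_const_mul]
  exact integral_mono (integrable_finsetSum _ fun i _ => (hF i).abs)
    ((integrable_piLp_iff.2 hF).norm.const_mul _) fun ω => sum_abs_le_sqrt_card_mul_norm (F ω)

end EuclideanSpace

section ExponentialMovingAverage

variable {Ω : Type*} {m0 : MeasurableSpace Ω} {μ : Measure Ω}
  {ℱ : ℕ → MeasurableSpace Ω} {β D₀ D₁ u₀ : ℝ} {u Z G : ℕ → Ω → ℝ}

lemma ewma_nonneg (hβ : β ∈ Set.Icc 0 1) (hu₀ : 0 ≤ u₀) (hu0 : u 0 = fun _ => u₀)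
    (hrec : ∀ n ω, u (n + 1) ω = β * u n ω + (1 - β) * Z (n + 1) ω) (hZ0 : ∀ n, 0 ≤ Z n) :
    ∀ n ω, 0 ≤ u n ω
  | 0, ω => by simp [hu0, hu₀]
  | n + 1, ω => by
    rw [hrec]
    have := ewma_nonneg hβ hu₀ hu0 hrec hZ0 n ω
    have : 0 ≤ Z (n + 1) ω := hZ0 (n + 1) ω
    have := hβ.1
    have : 0 ≤ 1 - β := sub_nonneg.2 hβ.2
    positivity

lemma ewma_integrable [IsFiniteMeasure μ] (hu0 : u 0 = fun _ => u₀)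
    (hrec : ∀ n ω, u (n + 1) ω = β * u n ω + (1 - β) * Z (n + 1) ω)
    (hZ : ∀ n, Integrable (Z n) μ) : ∀ n, Integrable (u n) μ
  | 0 => by simp [hu0]
  | n + 1 => by
    rw [funext (hrec n)]
    exact ((ewma_integrable hu0 hrec hZ n).const_mul β).add ((hZ (n + 1)).const_mul (1 - β))

lemma ewma_measurable (hu0 : u 0 = fun _ => u₀)
    (hrec : ∀ n ω, u (n + 1) ω = β * u n ω + (1 - β) * Z (n + 1) ω)
    (hZ : ∀ s t, 1 ≤ s → s < t → Measurable[ℱ t] (Z s)) : ∀ n t, n < t → Measurable[ℱ t] (u n)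
  | 0, _, _ => by rw [hu0]; exact measurable_const
  | n + 1, t, h => by
    rw [funext (hrec n)]
    exact ((ewma_measurable hu0 hrec hZ n t (by omega)).const_mul β).add
      ((hZ (n + 1) t (by omega) h).const_mul (1 - β))

/- The step `n → n + 1` conditions on `ℱ (n + 1)` to remove the newest sample `Z (n + 1)` and
feeds what is left, `a β u n + (c + a (1 - β) D₀)`, back into the statement: hence the general
`a, c`. -/
theorem integral_sqrt_ewma_le [IsProbabilityMeasure μ] (hℱ : ∀ n, ℱ n ≤ m0)
    (hβ : β ∈ Set.Ioo 0 1) (hD₀ : 0 < D₀) (hD₁ : 0 ≤ D₁) (hu₀ : 0 ≤ u₀) (hu0 : u 0 = fun _ => u₀)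
    (hrec : ∀ n ω, u (n + 1) ω = β * u n ω + (1 - β) * Z (n + 1) ω)
    (hu : ∀ n, StronglyMeasurable[ℱ (n + 1)] (u n))
    (hZ0 : ∀ n, 0 ≤ Z n) (hZ : ∀ n, Integrable (Z n) μ)
    (hG : ∀ n, StronglyMeasurable[ℱ n] (G n)) (hGi : ∀ n, Integrable (G n) μ)
    (hcond : ∀ n, μ[Z (n + 1)|ℱ (n + 1)] ≤ᵐ[μ] fun ω => D₀ + D₁ * G (n + 1) ω ^ 2) :
    ∀ n {a c : ℝ}, 0 < a → 0 ≤ c →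
      ∫ ω, √(a * u n ω + c) ∂μ ≤ √(a * (u₀ + D₀) + c)
        + √(a * (1 - β) * D₁) * discountedSum √β (fun r => ∫ ω, |G r ω| ∂μ) n
  | 0, a, c, ha, hc => by
    simp only [hu0, integral_const, probReal_univ, one_smul, discountedSum_zero, mul_zero,
      add_zero]
    gcongr
    linarith
  | n + 1, a, c, ha, hc => by
    obtain ⟨hβ0, hβ1⟩ := hβ
    have hb : 0 < a * (1 - β) := mul_pos ha (by linarith)
    have hstep := integral_sqrt_add_mul_le_of_condExp_le (hℱ (n + 1)) hb hD₀ hD₁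
      (K := fun ω => a * β * u n ω + c) (((hu n).const_mul (a * β)).add_const c)
      (fun ω => by have := ewma_nonneg ⟨hβ0.le, hβ1.le⟩ hu₀ hu0 hrec hZ0 n ω; positivity)
      (((ewma_integrable hu0 hrec hZ n).const_mul (a * β)).add (integrable_const c))
      (hZ0 (n + 1)) (hZ (n + 1)) (hG (n + 1)) (hGi (n + 1)) (hcond n)
    have ih := integral_sqrt_ewma_le hℱ ⟨hβ0, hβ1⟩ hD₀ hD₁ hu₀ hu0 hrec hu hZ0 hZ hG hGi hcond n
      (mul_pos ha hβ0) (by positivity : 0 ≤ c + a * (1 - β) * D₀)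
    have hfirst : √(a * β * (u₀ + D₀) + (c + a * (1 - β) * D₀)) ≤ √(a * (u₀ + D₀) + c) :=
      Real.sqrt_le_sqrt (by nlinarith [mul_nonneg ha.le hu₀])
    have hcoef : √(a * β * (1 - β) * D₁) = √(a * (1 - β) * D₁) * √β := by
      rw [← Real.sqrt_mul (by positivity)]; ring_nf
    calc ∫ ω, √(a * u (n + 1) ω + c) ∂μ
        = ∫ ω, √(a * β * u n ω + c + a * (1 - β) * Z (n + 1) ω) ∂μ := by
          simp_rw [hrec]; ring_nf
      _ ≤ ∫ ω, √(a * β * u n ω + (c + a * (1 - β) * D₀)) ∂μ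
          + √(a * (1 - β) * D₁) * ∫ ω, |G (n + 1) ω| ∂μ := by simpa only [add_assoc] using hstep
      _ ≤ √(a * (u₀ + D₀) + c)
          + √(a * (1 - β) * D₁) * discountedSum √β (fun r => ∫ ω, |G r ω| ∂μ) (n + 1) := by
          rw [discountedSum_succ]
          rw [hcoef] at ih
          linarith

end ExponentialMovingAverage

section RMSProp

variable {d : ℕ} {Ω : Type*} {m0 : MeasurableSpace Ω} {μ : Measure Ω} [IsProbabilityMeasure μ]
  {ℱ : ℕ → MeasurableSpace Ω} {g v F : ℕ → Ω → EuclideanSpace ℝ (Fin d)}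
  {v₀ : EuclideanSpace ℝ (Fin d)} {β D₀ D₁ : ℝ}

lemma rmsprop_integral_sqrt_coord_le (hℱ : ∀ t, ℱ t ≤ m0)
    (hgℱ : ∀ s t, 1 ≤ s → s < t → Measurable[ℱ t] (g s)) (hgL2 : ∀ t, MemLp (g t) 2 μ)
    (hβ : β ∈ Set.Ioo 0 1) (hD₀ : 0 < D₀) (hD₁ : 0 ≤ D₁)
    (hv₀ : ∀ i, 0 ≤ v₀ i) (hv0 : v 0 = fun _ => v₀)
    (hvrec : ∀ n ω i, v (n + 1) ω i = β * v n ω i + (1 - β) * g (n + 1) ω i ^ 2)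
    (hmean : ∀ t, 1 ≤ t → ∀ i, μ[fun ω => g t ω i|ℱ t] =ᵐ[μ] fun ω => F t ω i)
    (hvar : ∀ t, 1 ≤ t → ∀ i, ∀ᵐ ω ∂μ, μ[fun ω => g t ω i ^ 2|ℱ t] ω ≤ D₀ + D₁ * F t ω i ^ 2)
    (i : Fin d) (n : ℕ) :
    ∫ ω, √(v n ω i) ∂μ
      ≤ √(v₀ i + D₀) + √((1 - β) * D₁) * discountedSum √β (fun r => ∫ ω, |F r ω i| ∂μ) n := by
  -- `F` need not be measurable; its `ℱ`-measurable version `G` carries the variance bound.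
  set G : ℕ → Ω → ℝ := fun r => μ[fun ω => g r ω i|ℱ r]
  have hv0i : (fun ω => v 0 ω i) = fun _ => v₀ i := by simp [hv0]
  have hgsq : ∀ s t, 1 ≤ s → s < t → Measurable[ℱ t] (fun ω => g s ω i ^ 2) := fun s t h1 h2 =>
    ((measurable_pi_apply i).comp ((WithLp.measurable_ofLp 2 _).comp (hgℱ s t h1 h2))).pow_const 2
  have hcond : ∀ n, μ[fun ω => g (n + 1) ω i ^ 2|ℱ (n + 1)] ≤ᵐ[μ]
      fun ω => D₀ + D₁ * G (n + 1) ω ^ 2 := fun n => by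
    filter_upwards [hvar (n + 1) n.succ_pos i, hmean (n + 1) n.succ_pos i] with ω h1 h2
    simpa only [G, h2] using h1
  have hbound := integral_sqrt_ewma_le (u := fun n ω => v n ω i) (G := G) hℱ hβ hD₀ hD₁ (hv₀ i)
    hv0i (hvrec · · i)
    (fun n => (ewma_measurable (u := fun n ω => v n ω i) hv0i (hvrec · · i) hgsq n (n + 1)
      n.lt_succ_self).stronglyMeasurable)
    (fun n ω => sq_nonneg _) (fun n => (memLp_piLp_iff.1 (hgL2 n) i).integrable_sq)
    (fun n => stronglyMeasurable_condExp) (fun n => integrable_condExp) hcond n one_pos le_rfl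
  simp only [one_mul, add_zero] at hbound
  refine hbound.trans (add_le_add_right (mul_le_mul_of_nonneg_left
    (discountedSum_mono (Real.sqrt_nonneg _) fun r hr => (integral_congr_ae ?_).le)
    (Real.sqrt_nonneg _)) _)
  filter_upwards [hmean r (mem_Icc.1 hr).1 i] with ω h
  simp only [G, h]

lemma rmsprop_integral_sqrt_norm_le {ζ : ℝ} (hℱ : ∀ t, ℱ t ≤ m0)
    (hgℱ : ∀ s t, 1 ≤ s → s < t → Measurable[ℱ t] (g s)) (hgL2 : ∀ t, MemLp (g t) 2 μ)
    (hβ : β ∈ Set.Ioo 0 1) (hζ : 0 ≤ ζ) (hD₀ : 0 < D₀) (hD₁ : 0 ≤ D₁)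
    (hv₀ : ∀ i, 0 ≤ v₀ i) (hv0 : v 0 = fun _ => v₀)
    (hvrec : ∀ n ω i, v (n + 1) ω i = β * v n ω i + (1 - β) * g (n + 1) ω i ^ 2)
    (hmean : ∀ t, 1 ≤ t → ∀ i, μ[fun ω => g t ω i|ℱ t] =ᵐ[μ] fun ω => F t ω i)
    (hvar : ∀ t, 1 ≤ t → ∀ i, ∀ᵐ ω ∂μ, μ[fun ω => g t ω i ^ 2|ℱ t] ω ≤ D₀ + D₁ * F t ω i ^ 2)
    (n : ℕ) :
    ∫ ω, √(β * ‖v n ω‖ + ζ) ∂μ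
      ≤ √ζ + d * √(D₀ + ‖v₀‖)
        + √((1 - β) * D₁) * √d * discountedSum √β (fun r => ∫ ω, ‖F r ω‖ ∂μ) n := by
  have hv0i : ∀ i, (fun ω => v 0 ω i) = fun _ => v₀ i := fun i => by simp [hv0]
  have hv_nonneg : ∀ ω i, 0 ≤ v n ω i := fun ω i =>
    ewma_nonneg (u := fun n ω => v n ω i) (Z := fun n ω => g n ω i ^ 2) ⟨hβ.1.le, hβ.2.le⟩
      (hv₀ i) (hv0i i) (hvrec · · i) (fun _ _ => sq_nonneg _) n ω
  have hv_int : ∀ i, Integrable (fun ω => v n ω i) μ := fun i =>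
    ewma_integrable (u := fun n ω => v n ω i) (hv0i i) (hvrec · · i)
      (fun t => (memLp_piLp_iff.1 (hgL2 t) i).integrable_sq) n
  have hv₀_sum : ∑ i, √(v₀ i + D₀) ≤ d * √(D₀ + ‖v₀‖) := by
    calc ∑ i, √(v₀ i + D₀) ≤ ∑ _i : Fin d, √(D₀ + ‖v₀‖) := sum_le_sum fun i _ =>
          Real.sqrt_le_sqrt (by linarith [(le_abs_self (v₀ i)).trans (PiLp.norm_apply_le v₀ i)])
      _ = d * √(D₀ + ‖v₀‖) := by simp
  have hF : ∀ r ∈ Icc 1 n, ∑ i, ∫ ω, |F r ω i| ∂μ ≤ √d * ∫ ω, ‖F r ω‖ ∂μ := fun r hr => by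
    simpa using EuclideanSpace.sum_integral_abs_le_sqrt_card_mul_integral_norm
      fun i => integrable_condExp.congr (hmean r (mem_Icc.1 hr).1 i)
  calc ∫ ω, √(β * ‖v n ω‖ + ζ) ∂μ ≤ √ζ + ∑ i, ∫ ω, √(v n ω i) ∂μ :=
        EuclideanSpace.integral_sqrt_mul_norm_add_le hβ.2.le hζ hv_nonneg hv_int
    _ ≤ √ζ + ∑ i, (√(v₀ i + D₀)
          + √((1 - β) * D₁) * discountedSum √β (fun r => ∫ ω, |F r ω i| ∂μ) n) := by
        gcongr with i
        exact rmsprop_integral_sqrt_coord_le hℱ hgℱ hgL2 hβ hD₀ hD₁ hv₀ hv0 hvrec hmean hvar i n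
    _ = √ζ + ∑ i, √(v₀ i + D₀) + √((1 - β) * D₁)
          * discountedSum √β (fun r => ∑ i, ∫ ω, |F r ω i| ∂μ) n := by
        rw [sum_add_distrib, ← mul_sum, sum_discountedSum, add_assoc]
    _ ≤ √ζ + d * √(D₀ + ‖v₀‖) + √((1 - β) * D₁)
          * discountedSum √β (fun r => √d * ∫ ω, ‖F r ω‖ ∂μ) n := by
        gcongr
        exact discountedSum_mono (Real.sqrt_nonneg _) hF
    _ = _ := by rw [discountedSum_const_mul, mul_assoc]

end RMSProp

theorem rmsprop_stage2_denominator_bound_general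
    -- dimension and objective
    {d : ℕ}
    (f : EuclideanSpace ℝ (Fin d) → ℝ)
    -- probability space and stochastic gradients
    {Ω : Type} [MeasurableSpace Ω] (μ : Measure Ω) [IsProbabilityMeasure μ]
    (g : ℕ → Ω → EuclideanSpace ℝ (Fin d))
    (hgmeas : ∀ t, Measurable (g t))
    (hgL2 : ∀ t, MemLp (g t) 2 μ)
    -- filtration ℱ_t = σ(g₁, …, g_{t−1})
    (ℱ : ℕ → MeasurableSpace Ω)
    (hℱ : ∀ t, ℱ t = ⨆ s ∈ Finset.Ico 1 t, MeasurableSpace.comap (g s) inferInstance)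
    (x : ℕ → Ω → EuclideanSpace ℝ (Fin d))
    -- second-moment recursion
    (ζ β₂ : ℝ) (hζ : 0 < ζ) (hβ₂ : β₂ ∈ Set.Ioo (0 : ℝ) 1)
    (v : ℕ → Ω → EuclideanSpace ℝ (Fin d)) (v₀ : EuclideanSpace ℝ (Fin d))
    (hv₀ : ∀ i, 0 < v₀ i) (hv0 : v 0 = fun _ => v₀)
    (hvrec : ∀ t, 1 ≤ t → ∀ ω, ∀ i : Fin d,
      v t ω i = β₂ * v (t - 1) ω i + (1 - β₂) * (g t ω i) ^ 2)
    -- Assumption 2: coordinate-wise affine noise variance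
    (D₀ D₁ : ℝ) (hD₀ : 0 < D₀) (hD₁ : 0 < D₁)
    (hmean : ∀ t, 1 ≤ t → ∀ i : Fin d,
      μ[fun ω => g t ω i|ℱ t] =ᵐ[μ] fun ω => gradient f (x t ω) i)
    (hvar : ∀ t, 1 ≤ t → ∀ i : Fin d, ∀ᵐ ω ∂μ,
      (μ[fun ω => (g t ω i) ^ 2|ℱ t]) ω ≤ D₀ + D₁ * (gradient f (x t ω) i) ^ 2)
    (T : ℕ) (hT : 1 ≤ T) :
    (1 / (T : ℝ)) * ∑ t ∈ Finset.Icc 1 T, ∫ ω, Real.sqrt (β₂ * ‖v (t - 1) ω‖ + ζ) ∂μ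
      ≤ Real.sqrt ζ + d * Real.sqrt (D₀ + ‖v₀‖)
        + (2 * Real.sqrt (d * D₁) / Real.sqrt (1 - β₂))
            * ((1 / (T : ℝ)) * ∑ t ∈ Finset.Icc 1 T, ∫ ω, ‖gradient f (x t ω)‖ ∂μ) := by
  have hle : ∀ t, ℱ t ≤ ‹MeasurableSpace Ω› := fun t =>
    (hℱ t).trans_le (iSup₂_le fun s _ => (hgmeas s).comap_le)
  have hgℱ : ∀ s t, 1 ≤ s → s < t → Measurable[ℱ t] (g s) := fun s t h1 h2 =>
    Measurable.of_comap_le ((le_biSup (fun s => MeasurableSpace.comap (g s) inferInstance)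
      (mem_Ico.2 ⟨h1, h2⟩)).trans (hℱ t).ge)
  have hstep := rmsprop_integral_sqrt_norm_le (F := fun r ω => gradient f (x r ω)) hle hgℱ hgL2
    hβ₂ hζ.le hD₀ hD₁.le (fun i => (hv₀ i).le) hv0
    (fun n ω i => hvrec (n + 1) n.succ_pos ω i) hmean hvar
  have hq : √β₂ < 1 := (Real.sqrt_lt' one_pos).2 (by linarith [hβ₂.2])
  refine (average_le_of_le_discountedSum (Real.sqrt_nonneg _) hq (by positivity)
    (fun r => integral_nonneg fun _ => norm_nonneg _) hstep hT).trans ?_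
  gcongr _ + ?_ * _
  calc √((1 - β₂) * D₁) * √d / (1 - √β₂) = √(d * D₁) * (√(1 - β₂) / (1 - √β₂)) := by
        rw [Real.sqrt_mul (by linarith [hβ₂.2]), Real.sqrt_mul (Nat.cast_nonneg _)]; ring
    _ ≤ √(d * D₁) * (2 / √(1 - β₂)) :=
        mul_le_mul_of_nonneg_left (Real.sqrt_one_sub_div_one_sub_sqrt_le hβ₂.1.le hβ₂.2)
          (Real.sqrt_nonneg _)
    _ = _ := by ring

/-- Lemma (Stage II bound on the denominator).  Under the affine noise variance
assumption alone, together with the recursion `v_{t,i} = β₂·v_{t−1,i} + (1−β₂)·g_{t,i}²`,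
for every `T ≥ 1`:
`(1/T)·Σ_{t=1}^T E[√(β₂·‖v_{t−1}‖ + ζ)]
   ≤ √ζ + d·√(D₀ + ‖v₀‖) + (2·√(d·D₁)/√(1−β₂)) · (1/T)·Σ_{t=1}^T E[‖∇f(x_t)‖]`. -/
theorem rmsprop_stage2_denominator_bound
    -- dimension and objective
    {d : ℕ} (hd : 1 ≤ d)
    (f : EuclideanSpace ℝ (Fin d) → ℝ) (hf : Differentiable ℝ f)
    -- probability space and stochastic gradients
    {Ω : Type} [MeasurableSpace Ω] (μ : Measure Ω) [IsProbabilityMeasure μ]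
    (g : ℕ → Ω → EuclideanSpace ℝ (Fin d))
    (hgmeas : ∀ t, Measurable (g t))
    (hgL2 : ∀ t, MemLp (g t) 2 μ)
    -- filtration ℱ_t = σ(g₁, …, g_{t−1})
    (ℱ : ℕ → MeasurableSpace Ω)
    (hℱ : ∀ t, ℱ t = ⨆ s ∈ Finset.Ico 1 t, MeasurableSpace.comap (g s) inferInstance)
    -- ℱ_t-measurable random points x_t, with deterministic x₀ = x₁
    (x : ℕ → Ω → EuclideanSpace ℝ (Fin d)) (x₁ : EuclideanSpace ℝ (Fin d))
    (hxmeas : ∀ t, Measurable[ℱ t] (x t))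
    (hx1 : x 1 = fun _ => x₁) (hx0 : x 0 = x 1)
    -- second-moment recursion
    (ζ β₂ : ℝ) (hζ : 0 < ζ) (hβ₂ : β₂ ∈ Set.Ioo (0 : ℝ) 1)
    (v : ℕ → Ω → EuclideanSpace ℝ (Fin d)) (v₀ : EuclideanSpace ℝ (Fin d))
    (hv₀ : ∀ i, 0 < v₀ i) (hv0 : v 0 = fun _ => v₀)
    (hvrec : ∀ t, 1 ≤ t → ∀ ω, ∀ i : Fin d,
      v t ω i = β₂ * v (t - 1) ω i + (1 - β₂) * (g t ω i) ^ 2)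
    -- Assumption 2: coordinate-wise affine noise variance
    (D₀ D₁ : ℝ) (hD₀ : 0 < D₀) (hD₁ : 0 < D₁)
    (hmean : ∀ t, 1 ≤ t → ∀ i : Fin d,
      μ[fun ω => g t ω i|ℱ t] =ᵐ[μ] fun ω => gradient f (x t ω) i)
    (hvar : ∀ t, 1 ≤ t → ∀ i : Fin d, ∀ᵐ ω ∂μ,
      (μ[fun ω => (g t ω i) ^ 2|ℱ t]) ω ≤ D₀ + D₁ * (gradient f (x t ω) i) ^ 2)
    (T : ℕ) (hT : 1 ≤ T) :
    (1 / (T : ℝ)) * ∑ t ∈ Finset.Icc 1 T, ∫ ω, Real.sqrt (β₂ * ‖v (t - 1) ω‖ + ζ) ∂μ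
      ≤ Real.sqrt ζ + d * Real.sqrt (D₀ + ‖v₀‖)
        + (2 * Real.sqrt (d * D₁) / Real.sqrt (1 - β₂))
            * ((1 / (T : ℝ)) * ∑ t ∈ Finset.Icc 1 T, ∫ ω, ‖gradient f (x t ω)‖ ∂μ) :=
  rmsprop_stage2_denominator_bound_general f μ g hgmeas hgL2 ℱ hℱ x ζ β₂ hζ hβ₂ v v₀ hv₀ hv0 hvrec
    D₀ D₁ hD₀ hD₁ hmean hvar T hT
end

section
/- Lemma (ratio bound for momentum over root of second moment). If 0 < β₁² < β₂ < 1 and ζ > 0, then for every t ≥ 1: b_t / √(a_t + ζ) ≤ (1 − β₁) / ( √(1 − β₂) · √(1 − β₁²/β₂) ). -/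
/-!
Writing `s = β₂ - β₁²`, the quantity `β₂ (1 - β₁)² a_t - (1 - β₂) s b_t²` stays nonnegative along the
recursion: one step of it is the identity
`β₂ (s x² + q² y²) - s (β₁ x + q y)² = (s x - β₁ q y)²`, a weighted Cauchy–Schwarz inequality.
Dividing by `β₂` and taking square roots gives the bound, with `ζ ≥ 0` only helping.
-/

theorem mul_sq_add_le (β₁ β₂ q x y : ℝ) :
    (β₂ - β₁ ^ 2) * (β₁ * x + q * y) ^ 2 ≤ β₂ * ((β₂ - β₁ ^ 2) * x ^ 2 + q ^ 2 * y ^ 2) := by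
  nlinarith [sq_nonneg ((β₂ - β₁ ^ 2) * x - β₁ * q * y)]

theorem momentum_sq_le_second_moment (β₁ β₂ : ℝ) (hβ₂0 : 0 ≤ β₂) (hβ₂1 : β₂ ≤ 1)
    (a b c : ℕ → ℝ) (ha0 : 0 ≤ a 0) (hb0 : b 0 = 0)
    (ha : ∀ t, 1 ≤ t → a t = β₂ * a (t - 1) + (1 - β₂) * (c t) ^ 2)
    (hb : ∀ t, 1 ≤ t → b t = β₁ * b (t - 1) + (1 - β₁) * c t) (t : ℕ) :
    (1 - β₂) * (β₂ - β₁ ^ 2) * b t ^ 2 ≤ β₂ * (1 - β₁) ^ 2 * a t := by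
  induction t with
  | zero => rw [hb0]; nlinarith [mul_nonneg hβ₂0 (mul_nonneg (sq_nonneg (1 - β₁)) ha0)]
  | succ n ih =>
    rw [ha (n + 1) n.succ_pos, hb (n + 1) n.succ_pos, Nat.add_sub_cancel]
    have step := mul_le_mul_of_nonneg_left (mul_sq_add_le β₁ β₂ (1 - β₁) (b n) (c (n + 1)))
      (sub_nonneg.2 hβ₂1)
    nlinarith [mul_le_mul_of_nonneg_left ih hβ₂0]

theorem div_sqrt_le_div_sqrt_of_mul_sq_le {x A k d : ℝ} (hk : 0 ≤ k) (hd : 0 < d)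
    (h : d * x ^ 2 ≤ k ^ 2 * A) : x / √A ≤ k / √d := by
  rcases le_or_gt x 0 with hx | hx
  · exact (div_nonpos_of_nonpos_of_nonneg hx (Real.sqrt_nonneg A)).trans (by positivity)
  have hA : 0 < A := pos_of_mul_pos_right ((by positivity : 0 < d * x ^ 2).trans_le h) (sq_nonneg k)
  rw [div_le_div_iff₀ (Real.sqrt_pos.2 hA) (Real.sqrt_pos.2 hd),
    ← pow_le_pow_iff_left₀ (by positivity) (by positivity) two_ne_zero, mul_pow, mul_pow,
    Real.sq_sqrt hd.le, Real.sq_sqrt hA.le]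
  linarith

theorem momentum_ratio_bound_general
    (β₁ β₂ ζ : ℝ) (hβ₁β₂ : β₁ ^ 2 < β₂) (hβ₂ : β₂ < 1) (hζ : 0 < ζ)
    (a b c : ℕ → ℝ) (ha0 : 0 ≤ a 0) (hb0 : b 0 = 0)
    (ha : ∀ t, 1 ≤ t → a t = β₂ * a (t - 1) + (1 - β₂) * (c t) ^ 2)
    (hb : ∀ t, 1 ≤ t → b t = β₁ * b (t - 1) + (1 - β₁) * c t) :
    ∀ t, 1 ≤ t →
      b t / Real.sqrt (a t + ζ)
        ≤ (1 - β₁) / (Real.sqrt (1 - β₂) * Real.sqrt (1 - β₁ ^ 2 / β₂)) := by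
  intro t _
  have hβ₂0 : 0 < β₂ := (sq_nonneg β₁).trans_lt hβ₁β₂
  have hβ₁ : β₁ < 1 := by nlinarith
  have hr : 0 < 1 - β₁ ^ 2 / β₂ := by rwa [sub_pos, div_lt_one hβ₂0]
  have key := momentum_sq_le_second_moment β₁ β₂ hβ₂0.le hβ₂.le a b c ha0 hb0 ha hb t
  rw [← Real.sqrt_mul (sub_nonneg.2 hβ₂.le)]
  refine div_sqrt_le_div_sqrt_of_mul_sq_le (sub_nonneg.2 hβ₁.le)
    (mul_pos (sub_pos.2 hβ₂) hr) ?_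
  have hd : (1 - β₂) * (1 - β₁ ^ 2 / β₂) * b t ^ 2 = (1 - β₂) * (β₂ - β₁ ^ 2) * b t ^ 2 / β₂ := by
    field_simp
  rw [hd, div_le_iff₀ hβ₂0]
  nlinarith [mul_nonneg (sq_nonneg (1 - β₁)) hζ.le]

/-- Lemma (ratio bound for momentum over root of second moment).
If `0 < β₁² < β₂ < 1` and `ζ > 0`, then for every `t ≥ 1`,
`b t / √(a t + ζ) ≤ (1 − β₁) / (√(1 − β₂) · √(1 − β₁²/β₂))`. -/
theorem momentum_ratio_bound
    (β₁ β₂ ζ : ℝ) (hβ₁ : 0 < β₁ ^ 2) (hβ₁β₂ : β₁ ^ 2 < β₂) (hβ₂ : β₂ < 1) (hζ : 0 < ζ)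
    (a b c : ℕ → ℝ) (hc : ∀ t, 1 ≤ t → 0 ≤ c t) (ha0 : 0 ≤ a 0) (hb0 : b 0 = 0)
    (ha : ∀ t, 1 ≤ t → a t = β₂ * a (t - 1) + (1 - β₂) * (c t) ^ 2)
    (hb : ∀ t, 1 ≤ t → b t = β₁ * b (t - 1) + (1 - β₁) * c t) :
    ∀ t, 1 ≤ t →
      b t / Real.sqrt (a t + ζ)
        ≤ (1 - β₁) / (Real.sqrt (1 - β₂) * Real.sqrt (1 - β₁ ^ 2 / β₂)) :=
  momentum_ratio_bound_general β₁ β₂ ζ hβ₁β₂ hβ₂ hζ a b c ha0 hb0 ha hb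
end

section
/- Geometric-weight Cauchy–Schwarz step. If 0 < β₁ < √β₂, 0 < β₂ < 1, and a₀ > 0, then for every t ≥ 1: b_t²/a_t ≤ ( (1−β₁)² / (1 − β₁/√β₂) ) · Σ_{i=1}^t (β₁/√β₂)^{t−i} · c_i²/a_i. -/
/-!
Unrolling the recursion gives `b_t = (1-β₁) ∑ β₁^(t-i) c_i`. With `r = β₁/√β₂ < 1` one has
`(β₁^k)² = r^k · r^k β₂^k`, so Cauchy–Schwarz bounds `(∑ β₁^(t-i) c_i)²` by
`(∑ r^(t-i)) · ∑ r^(t-i) β₂^(t-i) c_i²`. The first factor is a geometric sum, at most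
`1/(1-r)`, and `β₂^(t-i) a_i ≤ a_t` because each step of the recursion keeps at least the
fraction `β₂` of `a`.
-/

open Finset

theorem pow_sub_mul_le_of_mul_le_succ {R : Type*} [Semiring R] [PartialOrder R] [IsOrderedRing R]
    {β : R} (hβ : 0 ≤ β) {a : ℕ → R} (h : ∀ n, β * a n ≤ a (n + 1)) {m n : ℕ} (hmn : m ≤ n) :
    β ^ (n - m) * a m ≤ a n := by
  induction n, hmn using Nat.le_induction with
  | base => simp
  | succ n hmn ih =>
    calc β ^ (n + 1 - m) * a m = β * (β ^ (n - m) * a m) := by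
          rw [Nat.sub_add_comm hmn, pow_succ', mul_assoc]
      _ ≤ β * a n := mul_le_mul_of_nonneg_left ih hβ
      _ ≤ a (n + 1) := h n

theorem eq_sum_Icc_pow_mul_of_eq_mul_add {R : Type*} [Semiring R] {β : R} {b u : ℕ → R}
    (h₀ : b 0 = 0) (h : ∀ n, b (n + 1) = β * b n + u (n + 1)) (n : ℕ) :
    b n = ∑ i ∈ Icc 1 n, β ^ (n - i) * u i := by
  induction n with
  | zero => simp [h₀]
  | succ n ih =>
    rw [h, ih, sum_Icc_succ_top (by omega), mul_sum, Nat.sub_self, pow_zero, one_mul]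
    congr 1
    refine sum_congr rfl fun i hi => ?_
    rw [Nat.sub_add_comm (mem_Icc.mp hi).2, pow_succ', mul_assoc]

theorem sum_Icc_pow_sub_le {r : ℝ} (hr₀ : 0 ≤ r) (hr₁ : r < 1) (m n : ℕ) :
    ∑ i ∈ Icc m n, r ^ (n - i) ≤ 1 / (1 - r) := by
  rw [← Ico_add_one_right_eq_Icc, sum_Ico_reflect _ _ le_rfl]
  simpa using geom_sum_Ico_le_of_lt_one (m := 0) (n := n + 1 - m) hr₀ hr₁

theorem sq_sum_pow_mul_le {ι : Type*} (s : Finset ι) (k : ι → ℕ) {r q A : ℝ} (hr : 0 ≤ r)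
    {a c : ι → ℝ} (ha : ∀ i ∈ s, 0 < a i) (hA : ∀ i ∈ s, (q ^ 2) ^ k i * a i ≤ A) :
    (∑ i ∈ s, (r * q) ^ k i * c i) ^ 2
      ≤ (∑ i ∈ s, r ^ k i) * (∑ i ∈ s, r ^ k i * (c i ^ 2 / a i)) * A := by
  rw [mul_assoc, sum_mul s (fun i => r ^ k i * (c i ^ 2 / a i)) A]
  refine sum_sq_le_sum_mul_sum_of_sq_le_mul s (fun i _ => by positivity)
    (fun i hi => ?_) (fun i hi => ?_)
  · have hai := ha i hi
    have hA₀ : 0 ≤ A := (mul_nonneg (by positivity) hai.le).trans (hA i hi)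
    positivity
  · have hai := ha i hi
    calc ((r * q) ^ k i * c i) ^ 2
        = r ^ k i * (r ^ k i * (c i ^ 2 / a i) * ((q ^ 2) ^ k i * a i)) := by
          field_simp
          ring
      _ ≤ r ^ k i * (r ^ k i * (c i ^ 2 / a i) * A) := by
          gcongr
          exact hA i hi

theorem geometric_weight_cauchy_schwarz_step_general
    (β₁ β₂ : ℝ) (hβ₁0 : 0 < β₁) (hβ₁β₂ : β₁ < Real.sqrt β₂)
    (hβ₂0 : 0 < β₂) (hβ₂1 : β₂ < 1)
    (a b c : ℕ → ℝ) (ha0 : 0 < a 0) (hb0 : b 0 = 0)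
    (ha : ∀ t, 1 ≤ t → a t = β₂ * a (t - 1) + (1 - β₂) * (c t) ^ 2)
    (hb : ∀ t, 1 ≤ t → b t = β₁ * b (t - 1) + (1 - β₁) * c t) :
    ∀ t : ℕ, 1 ≤ t →
      (b t) ^ 2 / a t
        ≤ ((1 - β₁) ^ 2 / (1 - β₁ / Real.sqrt β₂))
            * ∑ i ∈ Finset.Icc 1 t, (β₁ / Real.sqrt β₂) ^ (t - i) * ((c i) ^ 2 / a i) := by
  intro t _
  set q := Real.sqrt β₂
  set r := β₁ / q
  have hq : 0 < q := Real.sqrt_pos.mpr hβ₂0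
  have hr₀ : 0 ≤ r := (div_pos hβ₁0 hq).le
  have hr₁ : r < 1 := (div_lt_one hq).mpr hβ₁β₂
  have ha_lower : ∀ {m n}, m ≤ n → β₂ ^ (n - m) * a m ≤ a n :=
    pow_sub_mul_le_of_mul_le_succ hβ₂0.le fun n => by
      rw [ha (n + 1) (Nat.le_add_left 1 n), Nat.add_sub_cancel]
      nlinarith [sq_nonneg (c (n + 1))]
  have ha_pos : ∀ n, 0 < a n := fun n => by
    simpa using (mul_pos (pow_pos hβ₂0 n) ha0).trans_le (ha_lower n.zero_le)
  have hb_sum : b t = (1 - β₁) * ∑ i ∈ Icc 1 t, β₁ ^ (t - i) * c i := by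
    rw [eq_sum_Icc_pow_mul_of_eq_mul_add hb0 (u := fun i => (1 - β₁) * c i)
      (fun n => by simpa using hb (n + 1) (Nat.le_add_left 1 n)), mul_sum]
    exact sum_congr rfl fun i _ => mul_left_comm _ _ _
  have hCS := sq_sum_pow_mul_le (Icc 1 t) (t - ·) hr₀ (c := c)
    (fun i _ => ha_pos i) (fun i hi => by
      rw [Real.sq_sqrt hβ₂0.le]; exact ha_lower (mem_Icc.mp hi).2)
  rw [div_mul_cancel₀ _ hq.ne'] at hCS
  have hT : 0 ≤ ∑ i ∈ Icc 1 t, r ^ (t - i) * (c i ^ 2 / a i) :=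
    sum_nonneg fun i _ => by have := ha_pos i; positivity
  have hat := ha_pos t
  rw [div_le_iff₀ hat, hb_sum, mul_pow]
  calc (1 - β₁) ^ 2 * (∑ i ∈ Icc 1 t, β₁ ^ (t - i) * c i) ^ 2
      ≤ (1 - β₁) ^ 2 * ((∑ i ∈ Icc 1 t, r ^ (t - i)) * _ * a t) := by gcongr
    _ ≤ (1 - β₁) ^ 2 * (1 / (1 - r) * _ * a t) := by
      gcongr
      exact sum_Icc_pow_sub_le hr₀ hr₁ 1 t
    _ = _ := by ring

/-- Geometric-weight Cauchy–Schwarz step. If `0 < β₁ < √β₂`, `0 < β₂ < 1`, and `a₀ > 0`,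
then for every `t ≥ 1`,
`b_t²/a_t ≤ ((1−β₁)²/(1 − β₁/√β₂)) · Σ_{i=1}^t (β₁/√β₂)^{t−i} · c_i²/a_i`. -/
theorem geometric_weight_cauchy_schwarz_step
    (β₁ β₂ : ℝ) (hβ₁0 : 0 < β₁) (hβ₁β₂ : β₁ < Real.sqrt β₂)
    (hβ₂0 : 0 < β₂) (hβ₂1 : β₂ < 1)
    (a b c : ℕ → ℝ) (hc : ∀ t, 1 ≤ t → 0 ≤ c t) (ha0 : 0 < a 0) (hb0 : b 0 = 0)
    (ha : ∀ t, 1 ≤ t → a t = β₂ * a (t - 1) + (1 - β₂) * (c t) ^ 2)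
    (hb : ∀ t, 1 ≤ t → b t = β₁ * b (t - 1) + (1 - β₁) * c t) :
    ∀ t : ℕ, 1 ≤ t →
      (b t) ^ 2 / a t
        ≤ ((1 - β₁) ^ 2 / (1 - β₁ / Real.sqrt β₂))
            * ∑ i ∈ Finset.Icc 1 t, (β₁ / Real.sqrt β₂) ^ (t - i) * ((c i) ^ 2 / a i) :=
  geometric_weight_cauchy_schwarz_step_general β₁ β₂ hβ₁0 hβ₁β₂ hβ₂0 hβ₂1 a b c ha0 hb0 ha hb
end
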